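/- The complex Δ = (L_1 * L_3) ∪ (L_2 * L_3) ∪ (L_1 * L_4), where L_1, L_2, L_3, L_4 are four cycles of length ≥ 4 on pairwise disjoint vertex sets, is a flag weak 3-pseudomanifold; moreover there exist an edge τ_1 of L_1 and an edge τ_2 of L_3 with V(lk_Δ τ_1) ∪ V(lk_Δ τ_2) = V(Δ), yet Δ is a proper subcomplex of lk_Δ τ_1 * lk_Δ τ_2. -/

import Mathlib

open Finset

/-- An abstract simplicial complex on vertex type `V`, given by a finite,
downward-closed family of finite faces containing the empty face. -/
structure SC (V : Type*) [DecidableEq V] where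
  faces : Finset (Finset V)
  empty_mem : ∅ ∈ faces
  down_closed : ∀ ⦃σ τ : Finset V⦄, σ ∈ faces → τ ⊆ σ → τ ∈ faces

namespace SC

variable {V : Type*} [DecidableEq V]

/-- The vertex set of a complex. -/
def vertexSet (Δ : SC V) : Finset V := Δ.faces.sup id

/-- `fNum Δ i` is the number of `i`-dimensional faces (faces of cardinality `i+1`). -/
def fNum (Δ : SC V) (i : ℕ) : ℕ := (Δ.faces.filter fun σ => σ.card = i + 1).card

/-- A complex is flag if it is the clique complex of its graph, i.e. every set of
vertices which is pairwise joined by edges is a face (equivalently, all minimal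
non-faces have cardinality two). -/
def IsFlag (Δ : SC V) : Prop :=
  ∀ σ : Finset V, (∀ u ∈ σ, ∀ v ∈ σ, ({u, v} : Finset V) ∈ Δ.faces) → σ ∈ Δ.faces

/-- The restriction `Δ[W]` of `Δ` to a set `W` of vertices. -/
def restrict (Δ : SC V) (W : Finset V) : SC V where
  faces := Δ.faces.filter fun σ => σ ⊆ W
  empty_mem := by simp [Δ.empty_mem]
  down_closed := by
    intro σ τ hσ hτ
    simp only [mem_filter] at hσ ⊢
    exact ⟨Δ.down_closed hσ.1 hτ, hτ.trans hσ.2⟩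

/-- The link of a face `σ` in `Δ`. -/
def link (Δ : SC V) (σ : Finset V) : SC V where
  faces := insert ∅ (Δ.faces.filter fun τ => Disjoint τ σ ∧ τ ∪ σ ∈ Δ.faces)
  empty_mem := mem_insert_self _ _
  down_closed := by
    intro τ ρ hτ hρ
    rcases mem_insert.1 hτ with h | h
    · subst h
      simp [Finset.subset_empty.1 hρ]
    · simp only [mem_filter] at h
      refine mem_insert.2 (Or.inr ?_)
      simp only [mem_filter]
      exact ⟨Δ.down_closed h.1 hρ, h.2.1.mono_left hρ,
        Δ.down_closed h.2.2 (Finset.union_subset_union hρ Finset.Subset.rfl)⟩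

/-- A facet is a maximal face. -/
def IsFacet (Δ : SC V) (σ : Finset V) : Prop :=
  σ ∈ Δ.faces ∧ ∀ τ ∈ Δ.faces, σ ⊆ τ → σ = τ

/-- `Δ` is pure of dimension `D`: all faces have dimension at most `D` and all
facets have dimension exactly `D`. -/
def Pure (Δ : SC V) (D : ℕ) : Prop :=
  (∀ σ ∈ Δ.faces, σ.card ≤ D + 1) ∧ (∃ σ ∈ Δ.faces, σ.card = D + 1) ∧
    ∀ σ : Finset V, Δ.IsFacet σ → σ.card = D + 1

/-- The graph (1-skeleton) of a complex. -/
def graph (Δ : SC V) : SimpleGraph V where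
  Adj u v := u ≠ v ∧ ({u, v} : Finset V) ∈ Δ.faces
  symm := by
    refine ⟨fun u v h => ?_⟩
    exact ⟨h.1.symm, by rw [Finset.pair_comm]; exact h.2⟩
  loopless := by refine ⟨fun u h => ?_⟩; exact h.1 rfl

/-- A complex is connected if its vertex set is nonempty and any two vertices are
joined by a path in its graph. -/
def Connected (Δ : SC V) : Prop :=
  Δ.vertexSet.Nonempty ∧ ∀ u ∈ Δ.vertexSet, ∀ v ∈ Δ.vertexSet, Δ.graph.Reachable u v

/-- The reduced Euler characteristic `χ̃(Δ) = -1 + f₀ - f₁ + f₂ - ⋯`. -/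
def redChar (Δ : SC V) : ℤ := -∑ σ ∈ Δ.faces, (-1 : ℤ) ^ σ.card

/-- `Δ` is an Eulerian complex of dimension `D`: it is pure of dimension `D` and the
reduced Euler characteristic of the link of every face `σ` (including `σ = ∅`)
equals `(-1) ^ (dim lk σ)`, written multiplicatively to avoid signed dimensions. -/
def IsEulerian (Δ : SC V) (D : ℕ) : Prop :=
  Δ.Pure D ∧ ∀ σ ∈ Δ.faces, (Δ.link σ).redChar * (-1) ^ σ.card = (-1) ^ D

/-- A weak pseudomanifold of dimension `D`: pure and every ridge ((D-1)-face) lies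
in exactly two facets. -/
def IsWeakPseudo (Δ : SC V) (D : ℕ) : Prop :=
  Δ.Pure D ∧ ∀ σ ∈ Δ.faces, σ.card = D →
    (Δ.faces.filter fun τ => σ ⊆ τ ∧ τ.card = D + 1).card = 2

/-- A normal pseudomanifold of dimension `D`: a connected weak pseudomanifold all of
whose links of faces of dimension `≤ D - 2` are connected. -/
def IsNormalPseudo (Δ : SC V) (D : ℕ) : Prop :=
  Δ.IsWeakPseudo D ∧ Δ.Connected ∧
    ∀ σ ∈ Δ.faces, σ.card + 1 ≤ D → (Δ.link σ).Connected

/-- The join of two complexes (on disjoint vertex sets). -/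
def join (Δ Γ : SC V) : SC V where
  faces := (Δ.faces ×ˢ Γ.faces).image fun p => p.1 ∪ p.2
  empty_mem := Finset.mem_image.2 ⟨(∅, ∅),
    Finset.mem_product.2 ⟨Δ.empty_mem, Γ.empty_mem⟩, Finset.union_empty ∅⟩
  down_closed := by
    intro σ τ hσ hτ
    rw [Finset.mem_image] at hσ ⊢
    obtain ⟨⟨a, b⟩, hab, rfl⟩ := hσ
    rw [Finset.mem_product] at hab
    refine ⟨(τ ∩ a, τ ∩ b), Finset.mem_product.2
      ⟨Δ.down_closed hab.1 Finset.inter_subset_right,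
       Γ.down_closed hab.2 Finset.inter_subset_right⟩, ?_⟩
    rw [← Finset.inter_union_distrib_left]
    exact Finset.inter_eq_left.2 hτ

/-- The trivial complex, whose only face is the empty face (identity for join). -/
def trivialSC : SC V where
  faces := {∅}
  empty_mem := Finset.mem_singleton_self ∅
  down_closed := by
    intro σ τ hσ hτ
    simp only [Finset.mem_singleton] at hσ ⊢
    subst hσ
    exact Finset.subset_empty.1 hτ

/-- The join of a finite family of complexes. -/
def bigJoin : {k : ℕ} → (Fin k → SC V) → SC V
  | 0, _ => trivialSC
  | _ + 1, C => (C 0).join (bigJoin fun i => C i.succ)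

/-- `Δ` is a cycle (circle) with `n` vertices: a connected, 1-dimensional complex
all of whose vertices have exactly two neighbours. -/
def IsCycle (Δ : SC V) (n : ℕ) : Prop :=
  Δ.vertexSet.card = n ∧ (∀ σ ∈ Δ.faces, σ.card ≤ 2) ∧
    (∀ v ∈ Δ.vertexSet, (Δ.link {v}).vertexSet.card = 2) ∧ Δ.Connected

/-- `Δ` is the boundary complex of the `d`-dimensional cross-polytope: its vertices
come in `d` antipodal pairs and the faces are exactly the sets containing at most
one vertex of each pair. -/
def IsCrossPolytopeBoundary (Δ : SC V) (d : ℕ) : Prop :=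
  ∃ x y : Fin d → V, Function.Injective x ∧ Function.Injective y ∧
    (∀ i j, x i ≠ y j) ∧
    ∀ σ : Finset V, σ ∈ Δ.faces ↔
      ((∀ v ∈ σ, ∃ i, v = x i ∨ v = y i) ∧ ∀ i, ¬(x i ∈ σ ∧ y i ∈ σ))

/-- `Δ` is a simplicial 2-sphere: a connected weak 2-pseudomanifold whose vertex
links are circles and whose reduced Euler characteristic is 1. -/
def IsSphere2 (Δ : SC V) : Prop :=
  Δ.Connected ∧ Δ.IsWeakPseudo 2 ∧
    (∀ v ∈ Δ.vertexSet, ∃ n, 3 ≤ n ∧ (Δ.link {v}).IsCycle n) ∧ Δ.redChar = 1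

/-- `Δ` is a (closed) simplicial 3-manifold: connected, pure of dimension 3, and the
link of every vertex is a simplicial 2-sphere. -/
def Is3Manifold (Δ : SC V) : Prop :=
  Δ.Connected ∧ Δ.Pure 3 ∧ ∀ v ∈ Δ.vertexSet, (Δ.link {v}).IsSphere2

/-- `Δ` is a disjoint union of cycles, each of length at least 4: it is
1-dimensional, 2-regular and its graph has no triangles. -/
def IsDisjointUnionOfCyclesGe4 (Δ : SC V) : Prop :=
  (∀ σ ∈ Δ.faces, σ.card ≤ 2) ∧
    (∀ v ∈ Δ.vertexSet, (Δ.link {v}).vertexSet.card = 2) ∧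
    ∀ u v w : V, ({u, v} : Finset V) ∈ Δ.faces → ({v, w} : Finset V) ∈ Δ.faces →
      ({u, w} : Finset V) ∈ Δ.faces → u = v ∨ v = w ∨ u = w

end SC

/-!
A cycle of length at least 4 is a flag weak 1-pseudomanifold. In a join `A * B` on disjoint
vertex sets the `(k + l)`-element cofaces of `a ∪ b` are the unions of the `k`-element cofaces of
`a` in `A` and the `l`-element cofaces of `b` in `B`, so joins of weak pseudomanifolds are weak
pseudomanifolds. A ridge of one of the three joins making up `Δ` has vertices in both factors and
therefore lies in no other join, so `Δ` is a weak 3-pseudomanifold; a clique of `Δ` meets each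
`Lᵢ` in a face of `Lᵢ` and lies in one of the three joins, so `Δ` is flag. For edges `τ₁ ∈ L₁`
and `τ₂ ∈ L₃` the links are `L₃ ⊔ L₄` and `L₁ ⊔ L₂`, and their join contains the edges between
`L₂` and `L₄`, which `Δ` lacks.
-/

namespace SC

variable {V : Type*} [DecidableEq V] {Δ Γ A B L : SC V} {σ τ a b : Finset V} {D n : ℕ}

@[ext]
theorem ext (h : Δ.faces = Γ.faces) : Δ = Γ := by
  cases Δ; cases Γ; subst h; rfl

theorem mem_vertexSet {v : V} : v ∈ Δ.vertexSet ↔ ∃ σ ∈ Δ.faces, v ∈ σ := by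
  simp [vertexSet, mem_sup]

theorem subset_vertexSet (hσ : σ ∈ Δ.faces) : σ ⊆ Δ.vertexSet :=
  le_sup (f := id) hσ

theorem singleton_mem_faces {v : V} (hv : v ∈ Δ.vertexSet) : {v} ∈ Δ.faces := by
  obtain ⟨σ, hσ, hvσ⟩ := mem_vertexSet.1 hv
  exact Δ.down_closed hσ (singleton_subset_iff.2 hvσ)

def union (Δ Γ : SC V) : SC V where
  faces := Δ.faces ∪ Γ.faces
  empty_mem := mem_union_left _ Δ.empty_mem
  down_closed := by
    intro σ τ hσ hτ
    rcases mem_union.1 hσ with h | h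
    · exact mem_union_left _ (Δ.down_closed h hτ)
    · exact mem_union_right _ (Γ.down_closed h hτ)

@[simp]
theorem faces_union : (Δ.union Γ).faces = Δ.faces ∪ Γ.faces := rfl

theorem vertexSet_union : (Δ.union Γ).vertexSet = Δ.vertexSet ∪ Γ.vertexSet :=
  sup_union

@[simp]
theorem union_self : Δ.union Δ = Δ := by
  ext σ; simp

@[simp]
theorem union_trivialSC : Δ.union trivialSC = Δ := by
  ext σ; simp [trivialSC, Δ.empty_mem]

@[simp]
theorem trivialSC_union : trivialSC.union Δ = Δ := by
  ext σ; simp [trivialSC, Δ.empty_mem]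

theorem mem_join : σ ∈ (A.join B).faces ↔ ∃ a ∈ A.faces, ∃ b ∈ B.faces, a ∪ b = σ := by
  simp [join, and_assoc]

theorem union_mem_join (ha : a ∈ A.faces) (hb : b ∈ B.faces) : a ∪ b ∈ (A.join B).faces :=
  mem_join.2 ⟨a, ha, b, hb, rfl⟩

theorem join_comm (A B : SC V) : A.join B = B.join A := by
  ext σ
  simp only [mem_join]
  constructor <;> rintro ⟨a, ha, b, hb, rfl⟩ <;> exact ⟨b, hb, a, ha, union_comm _ _⟩

@[simp]
theorem join_trivialSC : A.join trivialSC = A := by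
  ext σ; simp [mem_join, trivialSC]

@[simp]
theorem trivialSC_join : trivialSC.join A = A := by
  ext σ; simp [mem_join, trivialSC]

theorem vertexSet_join : (A.join B).vertexSet = A.vertexSet ∪ B.vertexSet := by
  ext v
  simp only [mem_union, mem_vertexSet, mem_join]
  constructor
  · rintro ⟨_, ⟨a, ha, b, hb, rfl⟩, hv⟩
    exact (mem_union.1 hv).imp (fun h => ⟨a, ha, h⟩) (fun h => ⟨b, hb, h⟩)
  · rintro (⟨a, ha, hv⟩ | ⟨b, hb, hv⟩)
    · exact ⟨a, ⟨a, ha, ∅, B.empty_mem, union_empty a⟩, hv⟩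
    · exact ⟨b, ⟨∅, A.empty_mem, b, hb, empty_union b⟩, hv⟩

theorem union_inter_vertexSet_left (hAB : Disjoint A.vertexSet B.vertexSet)
    (ha : a ⊆ A.vertexSet) (hb : b ⊆ B.vertexSet) : (a ∪ b) ∩ A.vertexSet = a := by
  rw [union_inter_distrib_right, inter_eq_left.2 ha,
    disjoint_iff_inter_eq_empty.1 (hAB.symm.mono_left hb), union_empty]

theorem mem_join_iff_of_disjoint (hAB : Disjoint A.vertexSet B.vertexSet) :
    σ ∈ (A.join B).faces ↔
      σ ⊆ A.vertexSet ∪ B.vertexSet ∧ σ ∩ A.vertexSet ∈ A.faces ∧ σ ∩ B.vertexSet ∈ B.faces := by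
  constructor
  · intro h
    obtain ⟨a, ha, b, hb, rfl⟩ := mem_join.1 h
    refine ⟨vertexSet_join (A := A) ▸ subset_vertexSet h, ?_, ?_⟩
    · rwa [union_inter_vertexSet_left hAB (subset_vertexSet ha) (subset_vertexSet hb)]
    · rwa [union_comm, union_inter_vertexSet_left hAB.symm (subset_vertexSet hb)
        (subset_vertexSet ha)]
  · rintro ⟨hσ, ha, hb⟩
    rw [← inter_eq_left.2 hσ, inter_union_distrib_left]
    exact union_mem_join ha hb

theorem exists_mem_vertexSet_left_of_mem_join (h : σ ∈ (A.join B).faces)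
    (hB : ∀ τ ∈ B.faces, τ.card < σ.card) : ∃ x ∈ σ, x ∈ A.vertexSet := by
  obtain ⟨a, ha, b, hb, rfl⟩ := mem_join.1 h
  rcases a.eq_empty_or_nonempty with rfl | ⟨x, hx⟩
  · exact absurd (hB b hb) (by simp)
  · exact ⟨x, mem_union_left b hx, subset_vertexSet ha hx⟩

theorem exists_mem_vertexSet_right_of_mem_join (h : σ ∈ (A.join B).faces)
    (hA : ∀ τ ∈ A.faces, τ.card < σ.card) : ∃ x ∈ σ, x ∈ B.vertexSet :=
  exists_mem_vertexSet_left_of_mem_join (join_comm A B ▸ h) hA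

theorem restrict_union (W : Finset V) :
    (Δ.union Γ).restrict W = (Δ.restrict W).union (Γ.restrict W) := by
  ext σ; simp [restrict, filter_union]

theorem restrict_join (W : Finset V) :
    (A.join B).restrict W = (A.restrict W).join (B.restrict W) := by
  ext σ
  simp only [restrict, mem_filter, mem_join]
  constructor
  · rintro ⟨⟨a, ha, b, hb, rfl⟩, hW⟩
    exact ⟨a, ⟨ha, subset_union_left.trans hW⟩, b, ⟨hb, subset_union_right.trans hW⟩, rfl⟩
  · rintro ⟨a, ⟨ha, haW⟩, b, ⟨hb, hbW⟩, rfl⟩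
    exact ⟨⟨a, ha, b, hb, rfl⟩, union_subset haW hbW⟩

theorem restrict_eq_self {W : Finset V} (h : Δ.vertexSet ⊆ W) : Δ.restrict W = Δ := by
  ext σ
  simp only [restrict, mem_filter, and_iff_left_iff_imp]
  exact fun hσ => (subset_vertexSet hσ).trans h

theorem restrict_eq_trivialSC {W : Finset V} (h : Disjoint Δ.vertexSet W) :
    Δ.restrict W = trivialSC := by
  ext σ
  simp only [restrict, trivialSC, mem_filter, mem_singleton]
  constructor
  · rintro ⟨hσ, hσW⟩
    exact disjoint_self.1 (h.mono (subset_vertexSet hσ) hσW)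
  · rintro rfl
    exact ⟨Δ.empty_mem, empty_subset W⟩

theorem link_union : (Δ.union Γ).link σ = (Δ.link σ).union (Γ.link σ) := by
  ext ρ
  simp only [link, faces_union, mem_insert, mem_filter, mem_union]
  constructor
  · rintro (rfl | ⟨-, hdisj, hρσ | hρσ⟩)
    · exact Or.inl (Or.inl rfl)
    · exact Or.inl (Or.inr ⟨Δ.down_closed hρσ subset_union_left, hdisj, hρσ⟩)
    · exact Or.inr (Or.inr ⟨Γ.down_closed hρσ subset_union_left, hdisj, hρσ⟩)
  · rintro ((rfl | ⟨hρ, hdisj, hρσ⟩) | (rfl | ⟨hρ, hdisj, hρσ⟩))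
    · exact Or.inl rfl
    · exact Or.inr ⟨Or.inl hρ, hdisj, Or.inl hρσ⟩
    · exact Or.inl rfl
    · exact Or.inr ⟨Or.inr hρ, hdisj, Or.inr hρσ⟩

theorem link_eq_trivialSC (hσ : σ.Nonempty) (hdisj : Disjoint σ Δ.vertexSet) :
    Δ.link σ = trivialSC := by
  ext ρ
  simp only [link, trivialSC, mem_insert, mem_filter, mem_singleton, or_iff_left_iff_imp]
  rintro ⟨-, -, hρσ⟩
  obtain ⟨x, hx⟩ := hσ
  exact absurd (subset_vertexSet hρσ (mem_union_right ρ hx)) (disjoint_left.1 hdisj hx)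

theorem link_join_of_isFacet (hAB : Disjoint A.vertexSet B.vertexSet) (hσ : A.IsFacet σ) :
    (A.join B).link σ = B := by
  have hσA : σ ⊆ A.vertexSet := subset_vertexSet hσ.1
  ext ρ
  simp only [link, mem_insert, mem_filter]
  constructor
  · rintro (rfl | ⟨-, hdisj, hρσ⟩)
    · exact B.empty_mem
    obtain ⟨hsub, hA, hB⟩ := (mem_join_iff_of_disjoint hAB).1 hρσ
    have hAσ : (ρ ∪ σ) ∩ A.vertexSet = σ :=
      (hσ.2 _ hA (subset_inter subset_union_right hσA)).symm
    refine B.down_closed hB fun x hx => mem_inter.2 ⟨mem_union_left σ hx, ?_⟩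
    rcases mem_union.1 (hsub (mem_union_left σ hx)) with hxA | hxB
    · exact absurd (hAσ ▸ mem_inter.2 ⟨mem_union_left σ hx, hxA⟩) (disjoint_left.1 hdisj hx)
    · exact hxB
  · intro hρ
    refine Or.inr ⟨empty_union ρ ▸ union_mem_join A.empty_mem hρ,
      hAB.symm.mono (subset_vertexSet hρ) hσA, ?_⟩
    rw [union_comm]
    exact union_mem_join hσ.1 hρ

theorem mem_vertexSet_link_singleton {v w : V} :
    w ∈ (Δ.link {v}).vertexSet ↔ Δ.graph.Adj v w := by
  simp only [mem_vertexSet, link, graph, mem_insert, mem_filter]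
  constructor
  · rintro ⟨ρ, rfl | ⟨-, hdisj, hρ⟩, hw⟩
    · simp at hw
    · have hwv : w ≠ v := fun h => disjoint_left.1 hdisj hw (h ▸ mem_singleton_self w)
      refine ⟨hwv.symm, Δ.down_closed hρ ?_⟩
      simp [insert_subset_iff, hw]
  · rintro ⟨hvw, hface⟩
    refine ⟨{w}, Or.inr ⟨Δ.down_closed hface (by simp), by simpa using hvw.symm, ?_⟩,
      mem_singleton_self w⟩
    rwa [union_comm, ← insert_eq]

def IsClique (Δ : SC V) (σ : Finset V) : Prop :=
  ∀ u ∈ σ, ∀ v ∈ σ, ({u, v} : Finset V) ∈ Δ.faces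

theorem IsClique.subset_vertexSet (hσ : Δ.IsClique σ) : σ ⊆ Δ.vertexSet :=
  fun u hu => mem_vertexSet.2 ⟨{u, u}, hσ u hu u hu, by simp⟩

theorem IsClique.mem_faces_of_card_le_two (hσ : Δ.IsClique σ) (hcard : σ.card ≤ 2) :
    σ ∈ Δ.faces := by
  obtain h0 | h1 | h2 : σ.card = 0 ∨ σ.card = 1 ∨ σ.card = 2 := by omega
  · rw [card_eq_zero.1 h0]
    exact Δ.empty_mem
  · obtain ⟨u, rfl⟩ := card_eq_one.1 h1
    simpa using hσ u (mem_singleton_self u) u (mem_singleton_self u)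
  · obtain ⟨u, v, -, rfl⟩ := card_eq_two.1 h2
    exact hσ u (by simp) v (by simp)

theorem IsClique.inter_vertexSet_mem (hσ : Δ.IsClique σ) (hL : L.IsFlag)
    (hΔL : Δ.restrict L.vertexSet = L) : σ ∩ L.vertexSet ∈ L.faces :=
  hL _ fun u hu v hv => hΔL ▸ mem_filter.2 ⟨hσ u (mem_of_mem_inter_left hu) v
    (mem_of_mem_inter_left hv), insert_subset (mem_of_mem_inter_right hu)
      (singleton_subset_iff.2 (mem_of_mem_inter_right hv))⟩

theorem IsClique.disjoint_or_disjoint {S T : Finset V} (hσ : Δ.IsClique σ) (hST : Disjoint S T)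
    (h : Δ.restrict (S ∪ T) = (Δ.restrict S).union (Δ.restrict T)) :
    Disjoint σ S ∨ Disjoint σ T := by
  by_contra! hmeet
  obtain ⟨u, huσ, huS⟩ := not_disjoint_iff.1 hmeet.1
  obtain ⟨w, hwσ, hwT⟩ := not_disjoint_iff.1 hmeet.2
  have huw : {u, w} ∈ (Δ.restrict (S ∪ T)).faces :=
    mem_filter.2 ⟨hσ u huσ w hwσ, by simp [insert_subset_iff, huS, hwT]⟩
  rw [h] at huw
  simp only [restrict, faces_union, mem_union, mem_filter, insert_subset_iff,
    singleton_subset_iff] at huw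
  rcases huw with ⟨-, -, hwS⟩ | ⟨-, huT, -⟩
  · exact disjoint_left.1 hST hwS hwT
  · exact disjoint_left.1 hST huS huT

theorem Connected.vertexSet_subset (hΔ : Δ.Connected) {S : Finset V}
    (hS : ∀ u ∈ S, ∀ v, Δ.graph.Adj u v → v ∈ S) {u : V} (hu : u ∈ S)
    (huΔ : u ∈ Δ.vertexSet) : Δ.vertexSet ⊆ S := by
  intro v hv
  obtain ⟨p⟩ := hΔ.2 u huΔ v hv
  clear huΔ hv
  induction p with
  | nil => exact hu
  | cons h _ ih => exact ih (hS _ hu _ h)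

theorem IsCycle.card_le_two_of_isClique (hL : L.IsCycle n) (hn : 4 ≤ n)
    (hσ : L.IsClique σ) : σ.card ≤ 2 := by
  by_contra! h3
  obtain ⟨u, hu⟩ := card_pos.1 (by omega : 0 < σ.card)
  -- every vertex of `σ` has both its neighbours in `σ`, so `σ` is the whole connected cycle
  have hnbrs : ∀ u ∈ σ, (L.link {u}).vertexSet = σ.erase u := by
    intro u hu
    refine (eq_of_subset_of_card_le (fun v hv => ?_) ?_).symm
    · exact mem_vertexSet_link_singleton.2
        ⟨(ne_of_mem_erase hv).symm, hσ u hu v (mem_of_mem_erase hv)⟩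
    · rw [hL.2.2.1 u (hσ.subset_vertexSet hu), card_erase_of_mem hu]
      omega
  have hclosed : L.vertexSet ⊆ σ := by
    refine hL.2.2.2.vertexSet_subset (fun u hu v huv => ?_) hu (hσ.subset_vertexSet hu)
    rw [← mem_vertexSet_link_singleton, hnbrs u hu] at huv
    exact mem_of_mem_erase huv
  have h2 := hL.2.2.1 u (hσ.subset_vertexSet hu)
  rw [hnbrs u hu, card_erase_of_mem hu] at h2
  have := card_le_card hclosed
  rw [hL.1] at this
  omega

theorem IsCycle.isFlag (hL : L.IsCycle n) (hn : 4 ≤ n) : L.IsFlag :=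
  fun _ hσ => IsClique.mem_faces_of_card_le_two hσ (hL.card_le_two_of_isClique hn hσ)

theorem pure_iff : Δ.Pure D ↔ (∀ σ ∈ Δ.faces, σ.card ≤ D + 1) ∧
    ∀ σ ∈ Δ.faces, ∃ τ ∈ Δ.faces, σ ⊆ τ ∧ τ.card = D + 1 := by
  constructor
  · rintro ⟨hbound, -, hfacet⟩
    refine ⟨hbound, fun σ hσ => ?_⟩
    obtain ⟨τ, hτ, hmax⟩ := exists_max_image (Δ.faces.filter (σ ⊆ ·)) card
      ⟨σ, mem_filter.2 ⟨hσ, Subset.rfl⟩⟩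
    rw [mem_filter] at hτ
    refine ⟨τ, hτ.1, hτ.2, hfacet τ ⟨hτ.1, fun ρ hρ hτρ => ?_⟩⟩
    exact eq_of_subset_of_card_le hτρ (hmax ρ (mem_filter.2 ⟨hρ, hτ.2.trans hτρ⟩))
  · rintro ⟨hbound, hext⟩
    refine ⟨hbound, ?_, fun σ hσ => ?_⟩
    · obtain ⟨τ, hτ, -, hcard⟩ := hext ∅ Δ.empty_mem
      exact ⟨τ, hτ, hcard⟩
    · obtain ⟨τ, hτ, hστ, hcard⟩ := hext σ hσ.1
      rwa [hσ.2 τ hτ hστ]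

theorem Pure.isFacet (hΔ : Δ.Pure D) (hσ : σ ∈ Δ.faces) (hcard : σ.card = D + 1) :
    Δ.IsFacet σ :=
  ⟨hσ, fun τ hτ hστ => eq_of_subset_of_card_le hστ (hcard ▸ hΔ.1 τ hτ)⟩

theorem Pure.union (hΔ : Δ.Pure D) (hΓ : Γ.Pure D) : (Δ.union Γ).Pure D := by
  obtain ⟨hΔbound, hΔext⟩ := pure_iff.1 hΔ
  obtain ⟨hΓbound, hΓext⟩ := pure_iff.1 hΓ
  refine pure_iff.2 ⟨fun σ hσ => ?_, fun σ hσ => ?_⟩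
  · rcases mem_union.1 hσ with h | h
    exacts [hΔbound σ h, hΓbound σ h]
  · rcases mem_union.1 hσ with h | h
    · obtain ⟨τ, hτ, hστ, hcard⟩ := hΔext σ h
      exact ⟨τ, mem_union_left _ hτ, hστ, hcard⟩
    · obtain ⟨τ, hτ, hστ, hcard⟩ := hΓext σ h
      exact ⟨τ, mem_union_right _ hτ, hστ, hcard⟩

def cofaces (Δ : SC V) (σ : Finset V) (k : ℕ) : Finset (Finset V) :=
  Δ.faces.filter fun τ => σ ⊆ τ ∧ τ.card = k

theorem cofaces_union {k : ℕ} :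
    (Δ.union Γ).cofaces σ k = Δ.cofaces σ k ∪ Γ.cofaces σ k :=
  filter_union _ _ _

theorem cofaces_eq_empty {k : ℕ} {x : V} (hx : x ∈ σ) (hxΔ : x ∉ Δ.vertexSet) :
    Δ.cofaces σ k = ∅ :=
  filter_eq_empty_iff.2 fun _ hτ hστ => hxΔ (subset_vertexSet hτ (hστ.1 hx))

theorem cofaces_self (hσ : σ ∈ Δ.faces) : Δ.cofaces σ σ.card = {σ} := by
  ext τ
  simp only [cofaces, mem_filter, mem_singleton]
  constructor
  · rintro ⟨-, hστ, hcard⟩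
    exact (eq_of_subset_of_card_le hστ hcard.le).symm
  · rintro rfl
    exact ⟨hσ, Subset.rfl, rfl⟩

theorem cofaces_singleton_two (v : V) :
    Δ.cofaces {v} 2 = (Δ.link {v}).vertexSet.image fun w => {v, w} := by
  ext τ
  simp only [cofaces, mem_filter, mem_image, mem_vertexSet_link_singleton, singleton_subset_iff]
  constructor
  · rintro ⟨hτ, hv, hcard⟩
    obtain ⟨x, y, hxy, rfl⟩ := card_eq_two.1 hcard
    rcases mem_insert.1 hv with rfl | hv
    · exact ⟨y, ⟨hxy, hτ⟩, rfl⟩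
    · obtain rfl := mem_singleton.1 hv
      exact ⟨x, ⟨hxy.symm, by rwa [pair_comm]⟩, pair_comm _ _⟩
  · rintro ⟨w, ⟨hvw, hτ⟩, rfl⟩
    exact ⟨hτ, mem_insert_self _ _, card_pair hvw⟩

theorem card_cofaces_singleton_two (v : V) :
    (Δ.cofaces {v} 2).card = (Δ.link {v}).vertexSet.card := by
  rw [cofaces_singleton_two, card_image_of_injOn]
  intro w hw w' hw' h
  have hvw := (mem_vertexSet_link_singleton.1 hw).1
  have : w ∈ ({v, w'} : Finset V) := by
    rw [← show ({v, w} : Finset V) = {v, w'} from h]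
    simp
  simpa [hvw.symm] using this

theorem card_cofaces_join (hAB : Disjoint A.vertexSet B.vertexSet) {k l : ℕ}
    (hA : ∀ τ ∈ A.faces, τ.card ≤ k) (hB : ∀ τ ∈ B.faces, τ.card ≤ l)
    (ha : a ⊆ A.vertexSet) (hb : b ⊆ B.vertexSet) :
    ((A.join B).cofaces (a ∪ b) (k + l)).card = (A.cofaces a k).card * (B.cofaces b l).card := by
  have hinter : ∀ a' ∈ A.faces, ∀ b' ∈ B.faces,
      (a' ∪ b') ∩ A.vertexSet = a' ∧ (a' ∪ b') ∩ B.vertexSet = b' := fun a' ha' b' hb' =>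
    ⟨union_inter_vertexSet_left hAB (subset_vertexSet ha') (subset_vertexSet hb'),
      by rw [union_comm, union_inter_vertexSet_left hAB.symm (subset_vertexSet hb')
        (subset_vertexSet ha')]⟩
  have hcofaces : (A.join B).cofaces (a ∪ b) (k + l) =
      (A.cofaces a k ×ˢ B.cofaces b l).image fun x => x.1 ∪ x.2 := by
    ext τ
    simp only [cofaces, mem_filter, mem_image, mem_product, Prod.exists, mem_join]
    constructor
    · rintro ⟨⟨a', ha', b', hb', rfl⟩, habτ, hcard⟩
      have hcard' := card_union_of_disjoint (hAB.mono (subset_vertexSet ha') (subset_vertexSet hb'))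
      have := hA a' ha'
      have := hB b' hb'
      obtain ⟨hia, hib⟩ := hinter a' ha' b' hb'
      refine ⟨a', b', ⟨⟨ha', ?_, by omega⟩, hb', ?_, by omega⟩, rfl⟩
      · rw [← hia]; exact subset_inter (subset_union_left.trans habτ) ha
      · rw [← hib]; exact subset_inter (subset_union_right.trans habτ) hb
    · rintro ⟨a', b', ⟨⟨ha', haa', hka⟩, hb', hbb', hlb⟩, rfl⟩
      refine ⟨⟨a', ha', b', hb', rfl⟩, union_subset_union haa' hbb', ?_⟩
      rw [card_union_of_disjoint (hAB.mono (subset_vertexSet ha') (subset_vertexSet hb')), hka, hlb]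
  rw [hcofaces, card_image_of_injOn, card_product]
  rintro ⟨a', b'⟩ hx ⟨a'', b''⟩ hy (h : a' ∪ b' = a'' ∪ b'')
  simp only [coe_product, Set.mem_prod, mem_coe, cofaces, mem_filter] at hx hy
  obtain ⟨h1, h2⟩ := hinter a' hx.1.1 b' hx.2.1
  obtain ⟨h3, h4⟩ := hinter a'' hy.1.1 b'' hy.2.1
  rw [h] at h1 h2
  exact Prod.ext (h1.symm.trans h3) (h2.symm.trans h4)

theorem IsCycle.isWeakPseudo_one (hL : L.IsCycle n) (hn : 1 ≤ n) : L.IsWeakPseudo 1 := by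
  have hdeg : ∀ v ∈ L.vertexSet, (L.cofaces {v} 2).card = 2 := fun v hv => by
    rw [card_cofaces_singleton_two, hL.2.2.1 v hv]
  refine ⟨pure_iff.2 ⟨hL.2.1, fun σ hσ => ?_⟩, fun σ hσ hcard => ?_⟩
  · by_cases hσ2 : σ.card = 2
    · exact ⟨σ, hσ, Subset.rfl, hσ2⟩
    obtain ⟨v, hv, hσv⟩ : ∃ v ∈ L.vertexSet, σ ⊆ {v} := by
      rcases σ.eq_empty_or_nonempty with rfl | ⟨v, hv⟩
      · obtain ⟨v, hv⟩ := card_pos.1 (hL.1 ▸ hn)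
        exact ⟨v, hv, empty_subset _⟩
      · refine ⟨v, subset_vertexSet hσ hv, fun w hw => ?_⟩
        have := hL.2.1 σ hσ
        rw [mem_singleton]
        exact card_le_one.1 (by omega) w hw v hv
    obtain ⟨τ, hτ⟩ := card_pos.1 (by rw [hdeg v hv]; omega : 0 < (L.cofaces {v} 2).card)
    simp only [cofaces, mem_filter] at hτ
    exact ⟨τ, hτ.1, hσv.trans hτ.2.1, hτ.2.2⟩
  · obtain ⟨v, rfl⟩ := card_eq_one.1 hcard
    exact hdeg v (subset_vertexSet hσ (mem_singleton_self v))

theorem IsWeakPseudo.join {p q : ℕ} (hA : A.IsWeakPseudo p) (hB : B.IsWeakPseudo q)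
    (hAB : Disjoint A.vertexSet B.vertexSet) : (A.join B).IsWeakPseudo (p + q + 1) := by
  obtain ⟨hAbound, hAext⟩ := pure_iff.1 hA.1
  obtain ⟨hBbound, hBext⟩ := pure_iff.1 hB.1
  refine ⟨pure_iff.2 ⟨fun σ hσ => ?_, fun σ hσ => ?_⟩, fun σ hσ hcard => ?_⟩
  · obtain ⟨a, ha, b, hb, rfl⟩ := mem_join.1 hσ
    have := card_union_le a b
    have := hAbound a ha
    have := hBbound b hb
    omega
  · obtain ⟨a, ha, b, hb, rfl⟩ := mem_join.1 hσ
    obtain ⟨a', ha', haa', hcarda⟩ := hAext a ha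
    obtain ⟨b', hb', hbb', hcardb⟩ := hBext b hb
    refine ⟨a' ∪ b', union_mem_join ha' hb', union_subset_union haa' hbb', ?_⟩
    rw [card_union_of_disjoint (hAB.mono (subset_vertexSet ha') (subset_vertexSet hb')),
      hcarda, hcardb]
    omega
  · obtain ⟨a, ha, b, hb, rfl⟩ := mem_join.1 hσ
    rw [card_union_of_disjoint (hAB.mono (subset_vertexSet ha) (subset_vertexSet hb))] at hcard
    have := hAbound a ha
    have := hBbound b hb
    change ((A.join B).cofaces (a ∪ b) (p + q + 1 + 1)).card = 2
    rw [show p + q + 1 + 1 = (p + 1) + (q + 1) by omega,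
      card_cofaces_join hAB hAbound hBbound (subset_vertexSet ha) (subset_vertexSet hb)]
    -- a ridge of the join is a facet of one factor joined with a ridge of the other
    obtain ⟨hca, hcb⟩ | ⟨hca, hcb⟩ : a.card = p + 1 ∧ b.card = q ∨ a.card = p ∧ b.card = q + 1 := by
      omega
    · rw [← hca, cofaces_self ha, card_singleton, one_mul]
      exact hB.2 b hb hcb
    · rw [← hcb, cofaces_self hb, card_singleton, mul_one]
      exact hA.2 a ha hca

section

variable {L₁ L₂ L₃ L₄ : SC V}

theorem isFlag_union_joins (hf₁ : L₁.IsFlag) (hf₂ : L₂.IsFlag) (hf₃ : L₃.IsFlag)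
    (hf₄ : L₄.IsFlag)
    (h12 : Disjoint L₁.vertexSet L₂.vertexSet) (h13 : Disjoint L₁.vertexSet L₃.vertexSet)
    (h14 : Disjoint L₁.vertexSet L₄.vertexSet) (h23 : Disjoint L₂.vertexSet L₃.vertexSet)
    (h24 : Disjoint L₂.vertexSet L₄.vertexSet) (h34 : Disjoint L₃.vertexSet L₄.vertexSet) :
    ((L₁.join L₃).union ((L₂.join L₃).union (L₁.join L₄))).IsFlag := by
  set Δ := (L₁.join L₃).union ((L₂.join L₃).union (L₁.join L₄))
  intro σ (hσ : Δ.IsClique σ)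
  have hV : σ ⊆ L₁.vertexSet ∪ L₂.vertexSet ∪ L₃.vertexSet ∪ L₄.vertexSet := by
    refine hσ.subset_vertexSet.trans (le_of_eq ?_)
    simp only [Δ, vertexSet_union, vertexSet_join]
    ext; simp only [mem_union]; tauto
  have hparts : σ ∩ L₁.vertexSet ∈ L₁.faces ∧ σ ∩ L₂.vertexSet ∈ L₂.faces ∧
      σ ∩ L₃.vertexSet ∈ L₃.faces ∧ σ ∩ L₄.vertexSet ∈ L₄.faces := by
    refine ⟨hσ.inter_vertexSet_mem hf₁ ?_, hσ.inter_vertexSet_mem hf₂ ?_,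
      hσ.inter_vertexSet_mem hf₃ ?_, hσ.inter_vertexSet_mem hf₄ ?_⟩ <;>
      simp [Δ, restrict_union, restrict_join, restrict_eq_self, restrict_eq_trivialSC,
        h12, h13, h14, h23, h24, h34, h12.symm, h13.symm, h14.symm, h23.symm, h24.symm, h34.symm]
  have hnoedge : (Disjoint σ L₁.vertexSet ∨ Disjoint σ L₂.vertexSet) ∧
      (Disjoint σ L₂.vertexSet ∨ Disjoint σ L₄.vertexSet) ∧
      (Disjoint σ L₃.vertexSet ∨ Disjoint σ L₄.vertexSet) := by
    refine ⟨hσ.disjoint_or_disjoint h12 ?_, hσ.disjoint_or_disjoint h24 ?_,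
      hσ.disjoint_or_disjoint h34 ?_⟩ <;> ext <;>
      simp [Δ, restrict_union, restrict_join, restrict_eq_self, restrict_eq_trivialSC,
        h12, h13, h14, h23, h24, h34, h12.symm, h13.symm, h14.symm, h23.symm, h24.symm, h34.symm,
        or_comm]
  -- the joined pairs are the edges of the path `L₂ - L₃ - L₁ - L₄`, which has no triangles
  suffices σ ⊆ L₁.vertexSet ∪ L₃.vertexSet ∨ σ ⊆ L₂.vertexSet ∪ L₃.vertexSet ∨
      σ ⊆ L₁.vertexSet ∪ L₄.vertexSet by
    simp only [Δ, faces_union, mem_union, mem_join_iff_of_disjoint h13,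
      mem_join_iff_of_disjoint h23, mem_join_iff_of_disjoint h14]
    tauto
  simp only [disjoint_left, subset_iff, mem_union] at hnoedge hV ⊢
  grind

theorem isWeakPseudo_union_joins (hw₁ : L₁.IsWeakPseudo 1) (hw₂ : L₂.IsWeakPseudo 1)
    (hw₃ : L₃.IsWeakPseudo 1) (hw₄ : L₄.IsWeakPseudo 1)
    (h12 : Disjoint L₁.vertexSet L₂.vertexSet) (h13 : Disjoint L₁.vertexSet L₃.vertexSet)
    (h14 : Disjoint L₁.vertexSet L₄.vertexSet) (h23 : Disjoint L₂.vertexSet L₃.vertexSet)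
    (h34 : Disjoint L₃.vertexSet L₄.vertexSet) :
    ((L₁.join L₃).union ((L₂.join L₃).union (L₁.join L₄))).IsWeakPseudo 3 := by
  have hw₁₃ := hw₁.join hw₃ h13
  have hw₂₃ := hw₂.join hw₃ h23
  have hw₁₄ := hw₁.join hw₄ h14
  refine ⟨hw₁₃.1.union (hw₂₃.1.union hw₁₄.1), fun σ hσ hcard => ?_⟩
  have hsmall : ∀ L : SC V, L.IsWeakPseudo 1 → ∀ τ ∈ L.faces, τ.card < σ.card :=
    fun L hL τ hτ => (hL.1.1 τ hτ).trans_lt (by omega)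
  change ((_ : SC V).cofaces σ (3 + 1)).card = 2
  simp only [faces_union, mem_union] at hσ
  rw [cofaces_union, cofaces_union]
  rcases hσ with h | h | h
  · obtain ⟨x, hxσ, hx⟩ := exists_mem_vertexSet_left_of_mem_join h (hsmall L₃ hw₃)
    obtain ⟨y, hyσ, hy⟩ := exists_mem_vertexSet_right_of_mem_join h (hsmall L₁ hw₁)
    rw [cofaces_eq_empty (Δ := L₂.join L₃) hxσ
        (by simp [vertexSet_join, disjoint_left.1 h12 hx, disjoint_left.1 h13 hx]),
      cofaces_eq_empty (Δ := L₁.join L₄) hyσ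
        (by simp [vertexSet_join, disjoint_right.1 h13 hy, disjoint_left.1 h34 hy]),
      union_empty, union_empty]
    exact hw₁₃.2 σ h hcard
  · obtain ⟨x, hxσ, hx⟩ := exists_mem_vertexSet_left_of_mem_join h (hsmall L₃ hw₃)
    obtain ⟨y, hyσ, hy⟩ := exists_mem_vertexSet_right_of_mem_join h (hsmall L₂ hw₂)
    rw [cofaces_eq_empty (Δ := L₁.join L₃) hxσ
        (by simp [vertexSet_join, disjoint_right.1 h12 hx, disjoint_left.1 h23 hx]),
      cofaces_eq_empty (Δ := L₁.join L₄) hyσ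
        (by simp [vertexSet_join, disjoint_right.1 h13 hy, disjoint_left.1 h34 hy]),
      empty_union, union_empty]
    exact hw₂₃.2 σ h hcard
  · obtain ⟨x, hxσ, hx⟩ := exists_mem_vertexSet_left_of_mem_join h (hsmall L₄ hw₄)
    obtain ⟨y, hyσ, hy⟩ := exists_mem_vertexSet_right_of_mem_join h (hsmall L₁ hw₁)
    rw [cofaces_eq_empty (Δ := L₁.join L₃) hyσ
        (by simp [vertexSet_join, disjoint_right.1 h14 hy, disjoint_right.1 h34 hy]),
      cofaces_eq_empty (Δ := L₂.join L₃) hxσ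
        (by simp [vertexSet_join, disjoint_left.1 h12 hx, disjoint_left.1 h13 hx]),
      empty_union, empty_union]
    exact hw₁₄.2 σ h hcard

theorem link_union_joins_of_isFacet_left (h12 : Disjoint L₁.vertexSet L₂.vertexSet)
    (h13 : Disjoint L₁.vertexSet L₃.vertexSet) (h14 : Disjoint L₁.vertexSet L₄.vertexSet)
    (hτ : L₁.IsFacet τ) (hτne : τ.Nonempty) :
    ((L₁.join L₃).union ((L₂.join L₃).union (L₁.join L₄))).link τ = L₃.union L₄ := by
  have hdisj : Disjoint τ (L₂.join L₃).vertexSet := by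
    rw [vertexSet_join]
    exact (disjoint_union_right.2 ⟨h12, h13⟩).mono_left (subset_vertexSet hτ.1)
  rw [link_union, link_union, link_join_of_isFacet h13 hτ, link_join_of_isFacet h14 hτ,
    link_eq_trivialSC hτne hdisj, trivialSC_union]

theorem link_union_joins_of_isFacet_right (h13 : Disjoint L₁.vertexSet L₃.vertexSet)
    (h23 : Disjoint L₂.vertexSet L₃.vertexSet) (h34 : Disjoint L₃.vertexSet L₄.vertexSet)
    (hτ : L₃.IsFacet τ) (hτne : τ.Nonempty) :
    ((L₁.join L₃).union ((L₂.join L₃).union (L₁.join L₄))).link τ = L₁.union L₂ := by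
  have hdisj : Disjoint τ (L₁.join L₄).vertexSet := by
    rw [vertexSet_join]
    exact (disjoint_union_right.2 ⟨h13.symm, h34⟩).mono_left (subset_vertexSet hτ.1)
  rw [link_union, link_union, join_comm L₁, join_comm L₂, link_join_of_isFacet h13.symm hτ,
    link_join_of_isFacet h23.symm hτ, link_eq_trivialSC hτne hdisj, union_trivialSC]

theorem faces_union_joins_ssubset {v₂ v₄ : V} (hv₂ : v₂ ∈ L₂.vertexSet)
    (hv₄ : v₄ ∈ L₄.vertexSet) (h12 : Disjoint L₁.vertexSet L₂.vertexSet)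
    (h23 : Disjoint L₂.vertexSet L₃.vertexSet) (h24 : Disjoint L₂.vertexSet L₄.vertexSet)
    (h34 : Disjoint L₃.vertexSet L₄.vertexSet) :
    ((L₁.join L₃).union ((L₂.join L₃).union (L₁.join L₄))).faces ⊂
      ((L₃.union L₄).join (L₁.union L₂)).faces := by
  refine (ssubset_iff_of_subset fun σ hσ => ?_).2 ⟨{v₄} ∪ {v₂},
    union_mem_join (mem_union_right _ (singleton_mem_faces hv₄))
      (mem_union_right _ (singleton_mem_faces hv₂)), ?_⟩
  · simp only [faces_union, mem_union] at hσ
    rcases hσ with h | h | h <;> obtain ⟨a, ha, b, hb, rfl⟩ := mem_join.1 h <;>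
      rw [union_comm] <;> exact union_mem_join (by simp [hb]) (by simp [ha])
  · simp only [faces_union, mem_union, not_or]
    refine ⟨fun h => ?_, fun h => ?_, fun h => ?_⟩ <;> have := subset_vertexSet h <;>
      simp [vertexSet_join, insert_subset_iff, disjoint_right.1 h12 hv₂, disjoint_left.1 h23 hv₂,
        disjoint_left.1 h24 hv₂, disjoint_right.1 h24 hv₄, disjoint_right.1 h34 hv₄] at this

end

end SC

/-- For four cycles `L₁, L₂, L₃, L₄` of lengths `≥ 4` on pairwise
disjoint vertex sets, `Δ = (L₁*L₃) ∪ (L₂*L₃) ∪ (L₁*L₄)` is a flag weak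
3-pseudomanifold with edges `τ₁ ∈ L₁`, `τ₂ ∈ L₃` such that
`V(lk τ₁) ∪ V(lk τ₂) = V(Δ)`, yet `Δ` is a proper subcomplex of `lk τ₁ * lk τ₂`. -/
theorem statement_16 {V : Type*} [DecidableEq V] (L₁ L₂ L₃ L₄ : SC V)
    (n₁ n₂ n₃ n₄ : ℕ) (h₁ : 4 ≤ n₁) (h₂ : 4 ≤ n₂) (h₃ : 4 ≤ n₃) (h₄ : 4 ≤ n₄)
    (hc₁ : L₁.IsCycle n₁) (hc₂ : L₂.IsCycle n₂) (hc₃ : L₃.IsCycle n₃)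
    (hc₄ : L₄.IsCycle n₄)
    (h12 : Disjoint L₁.vertexSet L₂.vertexSet) (h13 : Disjoint L₁.vertexSet L₃.vertexSet)
    (h14 : Disjoint L₁.vertexSet L₄.vertexSet) (h23 : Disjoint L₂.vertexSet L₃.vertexSet)
    (h24 : Disjoint L₂.vertexSet L₄.vertexSet) (h34 : Disjoint L₃.vertexSet L₄.vertexSet)
    (Δ : SC V)
    (hΔ : ∀ σ : Finset V, σ ∈ Δ.faces ↔
      σ ∈ (L₁.join L₃).faces ∨ σ ∈ (L₂.join L₃).faces ∨ σ ∈ (L₁.join L₄).faces) :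
    Δ.IsFlag ∧ Δ.IsWeakPseudo 3 ∧
    ∃ τ₁ ∈ L₁.faces, ∃ τ₂ ∈ L₃.faces, τ₁.card = 2 ∧ τ₂.card = 2 ∧
      (Δ.link τ₁).vertexSet ∪ (Δ.link τ₂).vertexSet = Δ.vertexSet ∧
      Δ.faces ⊂ ((Δ.link τ₁).join (Δ.link τ₂)).faces := by
  obtain rfl : Δ = (L₁.join L₃).union ((L₂.join L₃).union (L₁.join L₄)) := by
    ext σ
    simp [hΔ]
  have hw₁ := hc₁.isWeakPseudo_one (by omega)
  have hw₂ := hc₂.isWeakPseudo_one (by omega)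
  have hw₃ := hc₃.isWeakPseudo_one (by omega)
  have hw₄ := hc₄.isWeakPseudo_one (by omega)
  obtain ⟨τ₁, hτ₁, hτ₁c⟩ := hw₁.1.2.1
  obtain ⟨τ₂, hτ₂, hτ₂c⟩ := hw₃.1.2.1
  obtain ⟨v₂, hv₂⟩ := card_pos.1 (by rw [hc₂.1]; omega : 0 < L₂.vertexSet.card)
  obtain ⟨v₄, hv₄⟩ := card_pos.1 (by rw [hc₄.1]; omega : 0 < L₄.vertexSet.card)
  have hlink₁ := SC.link_union_joins_of_isFacet_left h12 h13 h14 (hw₁.1.isFacet hτ₁ hτ₁c)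
    (card_pos.1 (by omega))
  have hlink₂ := SC.link_union_joins_of_isFacet_right h13 h23 h34 (hw₃.1.isFacet hτ₂ hτ₂c)
    (card_pos.1 (by omega))
  refine ⟨SC.isFlag_union_joins (hc₁.isFlag h₁) (hc₂.isFlag h₂) (hc₃.isFlag h₃) (hc₄.isFlag h₄)
      h12 h13 h14 h23 h24 h34, SC.isWeakPseudo_union_joins hw₁ hw₂ hw₃ hw₄ h12 h13 h14 h23 h34,
    τ₁, hτ₁, τ₂, hτ₂, hτ₁c, hτ₂c, ?_, ?_⟩
  · rw [hlink₁, hlink₂]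
    simp only [SC.vertexSet_union, SC.vertexSet_join]
    ext
    simp only [mem_union]
    tauto
  · rw [hlink₁, hlink₂]
    exact SC.faces_union_joins_ssubset hv₂ hv₄ h12 h23 h24 h34
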